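/- arXiv:2112.07947 — 4 statements merged into one kernel-verified Lean document; each statement's English description precedes it below -/
import Mathlib

section
/- Let γ ∈ (0,1), d ≥ 2, ρ = |v₁⟩⟨v₁| a pure state, and Δ_ρ = I − ρ. Define χ₁* = ((1+√(1−γ))/2)ρ + ((1−√(1−γ))/2)Δ_ρ/(d−1) and χ₂* = ((1−√(1−γ))/2)ρ + ((1+√(1−γ))/2)Δ_ρ/(d−1). Then χ₁* and χ₂* are density matrices, F(χ₁*, χ₂*) = γ, and tr(ρχ₁*) − tr(ρχ₂*) = √(1−γ). -/
/-!
Both states have the form `p • ρ + q • (1 - ρ)` for the projection `ρ`. Such elements multiply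
coefficientwise, so by uniqueness of positive square roots
`√(p • ρ + q • (1 - ρ)) = √p • ρ + √q • (1 - ρ)`, and `√χ₁ χ₂ √χ₁` is again of this form with
coefficients `a b` and `c c'`, where `a, b = (1 ± √(1-γ))/2` and `c' = a/(d-1)`, `c = b/(d-1)`.
Its square root has trace `√(ab) + (d-1)√(cc') = 2√(ab) = √(1 - (1-γ)) = √γ`.
-/

open ComplexOrder

namespace Matrix.PosSemidef

/-- The positive semidefinite square root of a positive semidefinite matrix
(the definition removed from Mathlib, restored verbatim). -/
noncomputable def sqrt {n : Type*} [Fintype n] [DecidableEq n] {𝕜 : Type*} [RCLike 𝕜]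
    {A : Matrix n n 𝕜} (hA : A.PosSemidef) : Matrix n n 𝕜 :=
  hA.1.eigenvectorUnitary.1 * Matrix.diagonal ((↑) ∘ (√·) ∘ hA.1.eigenvalues) *
  (star hA.1.eigenvectorUnitary : Matrix n n 𝕜)

end Matrix.PosSemidef

open scoped MatrixOrder

section ProjMix

variable {R A : Type*}

def projMix [CommSemiring R] [Ring A] [Algebra R A] (P : A) (p q : R) : A :=
  p • P + q • (1 - P)

lemma IsIdempotentElem.projMix_mul_projMix [CommSemiring R] [Ring A] [Algebra R A] {P : A}
    (hP : IsIdempotentElem P) (p q p' q' : R) :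
    projMix P p q * projMix P p' q' = projMix P (p * p') (q * q') := by
  have h₁ : P * (1 - P) = 0 := hP.mul_one_sub_self
  have h₂ : (1 - P) * P = 0 := hP.one_sub_mul_self
  have h₃ : (1 - P) * (1 - P) = 1 - P := hP.one_sub.eq
  simp only [projMix, add_mul, mul_add, smul_mul_smul_comm, hP.eq, h₁, h₂, h₃, smul_zero,
    add_zero, zero_add]

lemma IsIdempotentElem.mul_projMix [CommSemiring R] [Ring A] [Algebra R A] {P : A}
    (hP : IsIdempotentElem P) (p q : R) : P * projMix P p q = p • P := by
  simp only [projMix, mul_add, mul_smul_comm, hP.eq, hP.mul_one_sub_self, smul_zero, add_zero]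

lemma IsStarProjection.projMix_nonneg [Ring A] [PartialOrder A] [StarRing A] [StarOrderedRing A]
    [Algebra ℝ A] [StarModule ℝ A] {P : A} (hP : IsStarProjection P) {p q : ℝ} (hp : 0 ≤ p)
    (hq : 0 ≤ q) : 0 ≤ projMix P p q :=
  add_nonneg (smul_nonneg hp hP.nonneg) (smul_nonneg hq hP.one_sub_nonneg)

variable [PartialOrder A] [Ring A] [StarRing A] [TopologicalSpace A] [StarOrderedRing A]
  [Algebra ℝ A] [ContinuousFunctionalCalculus ℝ A IsSelfAdjoint] [NonnegSpectrumClass ℝ A]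
  [StarModule ℝ A] [IsSemitopologicalRing A] [T2Space A]

lemma IsStarProjection.sqrt_projMix {P : A} (hP : IsStarProjection P) {p q : ℝ} (hp : 0 ≤ p)
    (hq : 0 ≤ q) : CFC.sqrt (projMix P p q) = projMix P √p √q :=
  CFC.sqrt_unique (by rw [hP.isIdempotentElem.projMix_mul_projMix, Real.mul_self_sqrt hp,
    Real.mul_self_sqrt hq]) (hP.projMix_nonneg (Real.sqrt_nonneg p) (Real.sqrt_nonneg q))

lemma IsStarProjection.sqrt_sqrt_mul_projMix_mul_sqrt {P : A} (hP : IsStarProjection P)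
    {p q p' q' : ℝ} (hp : 0 ≤ p) (hq : 0 ≤ q) (hp' : 0 ≤ p') (hq' : 0 ≤ q') :
    CFC.sqrt (CFC.sqrt (projMix P p q) * projMix P p' q' * CFC.sqrt (projMix P p q))
      = projMix P √(p * p') √(q * q') := by
  have hp_conj : √p * p' * √p = p * p' := by rw [mul_right_comm, Real.mul_self_sqrt hp]
  have hq_conj : √q * q' * √q = q * q' := by rw [mul_right_comm, Real.mul_self_sqrt hq]
  rw [hP.sqrt_projMix hp hq, hP.isIdempotentElem.projMix_mul_projMix,
    hP.isIdempotentElem.projMix_mul_projMix, hp_conj, hq_conj,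
    hP.sqrt_projMix (mul_nonneg hp hp') (mul_nonneg hq hq')]

end ProjMix

namespace Matrix

variable {n 𝕜 : Type*} [Fintype n] [DecidableEq n] [RCLike 𝕜]

lemma PosSemidef.sqrt_eq_cfcSqrt {A : Matrix n n 𝕜} (hA : A.PosSemidef) :
    hA.sqrt = CFC.sqrt A := by
  rw [CFC.sqrt_eq_real_sqrt A hA.nonneg, cfcₙ_eq_cfc, hA.1.cfc_eq]
  rfl

lemma trace_projMix {P : Matrix n n 𝕜} (hP : P.trace = 1) (p q : ℝ) :
    (projMix P p q).trace = ((p + q * (Fintype.card n - 1) : ℝ) : 𝕜) := by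
  simp only [projMix, trace_add, trace_smul, trace_sub, trace_one, hP]
  simp [RCLike.real_smul_eq_coe_mul]

end Matrix

lemma Real.sqrt_div_mul_div_mul_self {x y t : ℝ} (ht : 0 < t) :
    √(x / t * (y / t)) * t = √(x * y) := by
  rw [div_mul_div_comm, ← sq, Real.sqrt_div' _ (sq_nonneg t), Real.sqrt_sq ht.le,
    div_mul_cancel₀ _ ht.ne']

theorem stmt_4 (d : ℕ) (hd : 2 ≤ d) (γ : ℝ) (hγ : γ ∈ Set.Ioo (0:ℝ) 1)
    (ρ : Matrix (Fin d) (Fin d) ℂ)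
    (hρH : ρ.IsHermitian) (hρ2 : ρ * ρ = ρ) (hρtr : ρ.trace = 1)
    (χ₁ χ₂ : Matrix (Fin d) (Fin d) ℂ)
    (hχ₁ : χ₁ = (((1 + Real.sqrt (1-γ))/2 : ℝ) : ℂ) • ρ
        + ((((1 - Real.sqrt (1-γ))/2) / ((d:ℝ) - 1) : ℝ) : ℂ) • (1 - ρ))
    (hχ₂ : χ₂ = (((1 - Real.sqrt (1-γ))/2 : ℝ) : ℂ) • ρ
        + ((((1 + Real.sqrt (1-γ))/2) / ((d:ℝ) - 1) : ℝ) : ℂ) • (1 - ρ)) :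
    (χ₁.PosSemidef ∧ χ₁.trace = 1) ∧ (χ₂.PosSemidef ∧ χ₂.trace = 1) ∧
    (∀ (h1 : χ₁.PosSemidef) (hmid : (h1.sqrt * χ₂ * h1.sqrt).PosSemidef),
      (hmid.sqrt.trace)^2 = (γ : ℂ)) ∧
    (ρ * χ₁).trace - (ρ * χ₂).trace = ((Real.sqrt (1 - γ) : ℝ) : ℂ) := by
  have hρ : IsStarProjection ρ := ⟨hρ2, hρH⟩
  have hmix (p q : ℝ) : (p : ℂ) • ρ + (q : ℂ) • (1 - ρ) = projMix ρ p q := by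
    simp only [projMix, Complex.coe_smul]
  simp only [hmix] at hχ₁ hχ₂
  subst hχ₁ hχ₂
  set s := √(1 - γ)
  have hs : s * s = 1 - γ := Real.mul_self_sqrt (by linarith [hγ.2])
  have hs0 : 0 ≤ s := Real.sqrt_nonneg _
  have hs1 : s ≤ 1 := by nlinarith [hγ.1]
  have hd1 : (0 : ℝ) < d - 1 := sub_pos.mpr (Nat.one_lt_cast.mpr hd)
  have ha : 0 ≤ (1 + s) / 2 := by linarith
  have hb : 0 ≤ (1 - s) / 2 := by linarith
  have hc : 0 ≤ (1 - s) / 2 / (d - 1) := div_nonneg hb hd1.le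
  have hc' : 0 ≤ (1 + s) / 2 / (d - 1) := div_nonneg ha hd1.le
  refine ⟨⟨Matrix.nonneg_iff_posSemidef.mp (hρ.projMix_nonneg ha hc), ?_⟩,
    ⟨Matrix.nonneg_iff_posSemidef.mp (hρ.projMix_nonneg hb hc'), ?_⟩, fun h1 hmid => ?_, ?_⟩
  · rw [Matrix.trace_projMix hρtr, Fintype.card_fin, div_mul_cancel₀ _ hd1.ne']
    push_cast
    ring
  · rw [Matrix.trace_projMix hρtr, Fintype.card_fin, div_mul_cancel₀ _ hd1.ne']
    push_cast
    ring
  · rw [hmid.sqrt_eq_cfcSqrt, h1.sqrt_eq_cfcSqrt, hρ.sqrt_sqrt_mul_projMix_mul_sqrt ha hc hb hc',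
      Matrix.trace_projMix hρtr, Fintype.card_fin, Real.sqrt_div_mul_div_mul_self hd1,
      mul_comm ((1 - s) / 2), ← two_mul, RCLike.ofReal_eq_complex_ofReal, ← Complex.ofReal_pow,
      mul_pow, Real.sq_sqrt (mul_nonneg ha hb)]
    congr 1
    linear_combination -hs
  · rw [hρ.isIdempotentElem.mul_projMix, hρ.isIdempotentElem.mul_projMix, Matrix.trace_smul,
      Matrix.trace_smul, hρtr, Complex.real_smul, Complex.real_smul, ← sub_mul, mul_one,
      ← Complex.ofReal_sub]
    congr 1
    ring
end

section
/- Consider the POVM {ρ, I−ρ} for a pure state ρ on a d-dimensional space, and R ∈ ℕ repetitions. For γ = (ε/2)^{2/R} with ε ∈ (0, 1/4), the value of the optimization max over density matrices χ₁, χ₂ of (1/2)(tr(ρχ₁) − tr(ρχ₂)) subject to (√(tr(ρχ₁)tr(ρχ₂)) + √((1−tr(ρχ₁))(1−tr(ρχ₂))))^R ≥ ε/2 equals (1/2)√(1 − (ε/2)^{2/R}). -/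
open ComplexOrder Matrix

/-! Only the numbers `aᵢ = re tr(ρ χᵢ)` matter. Because `ρ` is a projection of trace one, each
`aᵢ` lies in `[0, 1]`, and every value in `[0, 1]` is attained by mixing `ρ` with the normalised
complement `1 - ρ`. For the scalar problem, AM-GM on the cross term of the fidelity
`F(a₁, a₂) = √(a₁a₂) + √((1 - a₁)(1 - a₂))` gives `(a₁ - a₂)² + F² ≤ 1`, with equality at
`aᵢ = (1 ± s)/2`. Writing `f = (ε/2)^(1/R)`, the constraint is `f ≤ F`, so
`a₁ - a₂ ≤ √(1 - f²)`, and `s = √(1 - f²)` attains it. -/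

section Projection

variable {n : Type*} [Fintype n] {P χ : Matrix n n ℂ}

theorem Matrix.IsStarProjection.posSemidef (hP : IsStarProjection P) : P.PosSemidef := by
  have hH : Pᴴ = P := hP.isSelfAdjoint
  have h := posSemidef_conjTranspose_mul_self P
  rwa [hH, hP.isIdempotentElem.eq] at h

-- `tr (P χ) = tr (Pᴴ χ P)` by idempotence and cyclicity.
theorem Matrix.IsStarProjection.re_trace_mul_nonneg (hP : IsStarProjection P)
    (hχ : χ.PosSemidef) : 0 ≤ (P * χ).trace.re := by
  have hH : Pᴴ = P := hP.isSelfAdjoint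
  have h : (P * χ).trace = (Pᴴ * χ * P).trace := by
    rw [hH, trace_mul_cycle, hP.isIdempotentElem.eq]
  rw [h]
  exact (Complex.nonneg_iff.mp (hχ.conjTranspose_mul_mul_same P).trace_nonneg).1

theorem Matrix.IsStarProjection.re_trace_mul_mem_Icc [DecidableEq n] (hP : IsStarProjection P)
    (hχ : χ.PosSemidef) (hχtr : χ.trace = 1) : (P * χ).trace.re ∈ Set.Icc 0 1 := by
  have hsplit : ((1 - P) * χ).trace = 1 - (P * χ).trace := by
    rw [Matrix.sub_mul, Matrix.one_mul, trace_sub, hχtr]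
  have hcompl := hP.one_sub.re_trace_mul_nonneg hχ
  rw [hsplit, Complex.sub_re, Complex.one_re] at hcompl
  exact ⟨hP.re_trace_mul_nonneg hχ, by linarith⟩

-- Weight `a` on the range of `P` and spread the rest uniformly over its complement.
theorem Matrix.IsStarProjection.exists_trace_mul_eq [DecidableEq n] (hP : IsStarProjection P)
    (hPtr : P.trace = 1) (hn : 2 ≤ Fintype.card n) {a : ℝ} (ha : a ∈ Set.Icc 0 1) :
    ∃ χ : Matrix n n ℂ, χ.PosSemidef ∧ χ.trace = 1 ∧ (P * χ).trace = a := by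
  have hcard : (1 : ℝ) < Fintype.card n := by exact_mod_cast hn
  set c : ℝ := (1 - a) / (Fintype.card n - 1)
  have hc : 0 ≤ c := div_nonneg (by linarith [ha.2]) (by linarith)
  refine ⟨(a : ℂ) • P + (c : ℂ) • (1 - P), ?_, ?_, ?_⟩
  · exact (hP.posSemidef.smul (Complex.zero_le_real.mpr ha.1)).add
      (hP.one_sub.posSemidef.smul (Complex.zero_le_real.mpr hc))
  · have hcard' : (Fintype.card n : ℂ) - 1 ≠ 0 := sub_ne_zero.mpr (by exact_mod_cast hcard.ne')
    simp only [trace_add, trace_smul, trace_sub, trace_one, hPtr, smul_eq_mul, c]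
    push_cast
    field_simp
    ring
  · have hPχ : P * ((a : ℂ) • P + (c : ℂ) • (1 - P)) = (a : ℂ) • P := by
      rw [Matrix.mul_add, Matrix.mul_smul, Matrix.mul_smul, Matrix.mul_sub, Matrix.mul_one,
        hP.isIdempotentElem.eq, sub_self, smul_zero, add_zero]
    rw [hPχ, trace_smul, hPtr, smul_eq_mul, mul_one]

end Projection

/-- The classical fidelity of the two-outcome distributions `(a, 1 - a)` and `(b, 1 - b)`. -/
noncomputable def binaryFidelity (a b : ℝ) : ℝ :=
  √(a * b) + √((1 - a) * (1 - b))

theorem sq_sub_add_sq_binaryFidelity_le_one {a b : ℝ} (ha : a ∈ Set.Icc 0 1)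
    (hb : b ∈ Set.Icc 0 1) : (a - b) ^ 2 + binaryFidelity a b ^ 2 ≤ 1 := by
  obtain ⟨ha0, ha1⟩ := ha
  obtain ⟨hb0, hb1⟩ := hb
  have hcross : √(a * b) * √((1 - a) * (1 - b)) = √(a * (1 - a)) * √(b * (1 - b)) := by
    rw [← Real.sqrt_mul (by positivity), ← Real.sqrt_mul (by nlinarith)]
    ring_nf
  -- AM-GM on the cross term: `2 √(a(1-a)) √(b(1-b)) ≤ a(1-a) + b(1-b)`.
  have hamgm := two_mul_le_add_sq (√(a * (1 - a))) (√(b * (1 - b)))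
  rw [Real.sq_sqrt (by nlinarith), Real.sq_sqrt (by nlinarith)] at hamgm
  have hA := Real.sq_sqrt (mul_nonneg ha0 hb0)
  have hB := Real.sq_sqrt (mul_nonneg (sub_nonneg.mpr ha1) (sub_nonneg.mpr hb1))
  unfold binaryFidelity
  nlinarith [hA, hB, hcross, hamgm]

theorem sub_le_sqrt_of_le_binaryFidelity {a b f : ℝ} (ha : a ∈ Set.Icc 0 1)
    (hb : b ∈ Set.Icc 0 1) (hf : 0 ≤ f) (h : f ≤ binaryFidelity a b) :
    a - b ≤ √(1 - f ^ 2) :=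
  Real.le_sqrt_of_sq_le <| by
    nlinarith [sq_sub_add_sq_binaryFidelity_le_one ha hb]

theorem binaryFidelity_one_add_div_two_one_sub_div_two (s : ℝ) :
    binaryFidelity ((1 + s) / 2) ((1 - s) / 2) = √(1 - s ^ 2) := by
  have h : (1 + s) / 2 * ((1 - s) / 2) = (1 - s ^ 2) / 4 := by ring
  have h' : (1 - (1 + s) / 2) * (1 - (1 - s) / 2) = (1 - s ^ 2) / 4 := by ring
  rw [binaryFidelity, h, h', Real.sqrt_div' _ (by norm_num : (0:ℝ) ≤ 4),
    show (4 : ℝ) = 2 ^ 2 by norm_num, Real.sqrt_sq (by norm_num)]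
  ring

theorem Matrix.IsStarProjection.exists_binaryFidelity_eq {n : Type*} [Fintype n]
    [DecidableEq n] {P : Matrix n n ℂ} (hP : IsStarProjection P) (hPtr : P.trace = 1)
    (hn : 2 ≤ Fintype.card n) {s : ℝ} (hs : s ∈ Set.Icc 0 1) :
    ∃ χ₁ χ₂ : Matrix n n ℂ, χ₁.PosSemidef ∧ χ₁.trace = 1 ∧ χ₂.PosSemidef ∧ χ₂.trace = 1 ∧
      binaryFidelity (P * χ₁).trace.re (P * χ₂).trace.re = √(1 - s ^ 2) ∧
      (P * χ₁).trace.re - (P * χ₂).trace.re = s := by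
  obtain ⟨hs0, hs1⟩ := hs
  obtain ⟨χ₁, hχ₁, hχ₁tr, hPχ₁⟩ :=
    hP.exists_trace_mul_eq hPtr hn (a := (1 + s) / 2) ⟨by linarith, by linarith⟩
  obtain ⟨χ₂, hχ₂, hχ₂tr, hPχ₂⟩ :=
    hP.exists_trace_mul_eq hPtr hn (a := (1 - s) / 2) ⟨by linarith, by linarith⟩
  refine ⟨χ₁, χ₂, hχ₁, hχ₁tr, hχ₂, hχ₂tr, ?_, ?_⟩ <;>
    rw [hPχ₁, hPχ₂, Complex.ofReal_re, Complex.ofReal_re]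
  · exact binaryFidelity_one_add_div_two_one_sub_div_two s
  · ring

theorem Real.rpow_two_div_natCast {x : ℝ} (hx : 0 ≤ x) (R : ℕ) :
    x ^ ((2 : ℝ) / R) = (x ^ (R : ℝ)⁻¹) ^ 2 := by
  rw [show (2 : ℝ) / R = (R : ℝ)⁻¹ * (2 : ℕ) by push_cast; ring]
  exact Real.rpow_mul_natCast hx _ 2

theorem stmt_8 (d : ℕ) (hd : 2 ≤ d) (R : ℕ) (hR : 0 < R)
    (ε : ℝ) (hε : ε ∈ Set.Ioo (0:ℝ) (1/4))
    (ρ : Matrix (Fin d) (Fin d) ℂ)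
    (hρH : ρ.IsHermitian) (hρ2 : ρ * ρ = ρ) (hρtr : ρ.trace = 1) :
    IsGreatest {v : ℝ | ∃ χ₁ χ₂ : Matrix (Fin d) (Fin d) ℂ,
      χ₁.PosSemidef ∧ χ₁.trace = 1 ∧ χ₂.PosSemidef ∧ χ₂.trace = 1 ∧
      (Real.sqrt ((ρ * χ₁).trace.re * (ρ * χ₂).trace.re)
        + Real.sqrt ((1 - (ρ * χ₁).trace.re) * (1 - (ρ * χ₂).trace.re)))^R ≥ ε/2 ∧
      v = (1/2) * ((ρ * χ₁).trace.re - (ρ * χ₂).trace.re)}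
      ((1/2) * Real.sqrt (1 - (ε/2) ^ ((2:ℝ)/(R:ℝ)))) := by
  have hε2 : 0 ≤ ε / 2 := by linarith [hε.1]
  set f := (ε / 2) ^ (R : ℝ)⁻¹
  have hf0 : 0 ≤ f := Real.rpow_nonneg hε2 _
  have hf1 : f ≤ 1 := Real.rpow_le_one hε2 (by linarith [hε.2]) (by positivity)
  have hfR : f ^ R = ε / 2 := Real.rpow_inv_natCast_pow hε2 hR.ne'
  rw [Real.rpow_two_div_natCast hε2]
  have hP : IsStarProjection ρ := ⟨hρ2, hρH⟩
  constructor
  · obtain ⟨χ₁, χ₂, hχ₁, hχ₁tr, hχ₂, hχ₂tr, hF, hsub⟩ :=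
      hP.exists_binaryFidelity_eq hρtr (by simpa using hd) (s := √(1 - f ^ 2))
        ⟨Real.sqrt_nonneg _, Real.sqrt_le_one.mpr (by nlinarith)⟩
    refine ⟨χ₁, χ₂, hχ₁, hχ₁tr, hχ₂, hχ₂tr, ?_, by rw [hsub]⟩
    change binaryFidelity _ _ ^ R ≥ ε / 2
    rw [hF, Real.sq_sqrt (by nlinarith), sub_sub_cancel, Real.sqrt_sq hf0, hfR]
  · rintro v ⟨χ₁, χ₂, hχ₁, hχ₁tr, hχ₂, hχ₂tr, hF, rfl⟩
    have hfF : f ≤ binaryFidelity (ρ * χ₁).trace.re (ρ * χ₂).trace.re :=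
      (pow_le_pow_iff_left₀ hf0 (add_nonneg (Real.sqrt_nonneg _) (Real.sqrt_nonneg _))
        hR.ne').mp (hfR ▸ hF)
    have := sub_le_sqrt_of_le_binaryFidelity (hP.re_trace_mul_mem_Icc hχ₁ hχ₁tr)
      (hP.re_trace_mul_mem_Icc hχ₂ hχ₂tr) hf0 hfF
    linarith
end

section
/- For any two probability vectors p, q ∈ [0,1]^N with Σp_k = Σq_k = 1, the total variation distance satisfies (1/2)Σ_k |p_k − q_k| ≤ √(1 − F_C(p,q)), where F_C(p,q) = (Σ_k √(p_k q_k))². -/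
theorem stmt_10 (N : ℕ) (p q : Fin N → ℝ)
    (hp : ∀ k, 0 ≤ p k) (hq : ∀ k, 0 ≤ q k)
    (hps : ∑ k, p k = 1) (hqs : ∑ k, q k = 1) :
    (1/2) * ∑ k, |p k - q k| ≤ Real.sqrt (1 - (∑ k, Real.sqrt (p k * q k))^2) := by
  set B : ℝ := ∑ k, Real.sqrt (p k * q k) with hB
  have habs : ∀ k, |p k - q k| = |Real.sqrt (p k) - Real.sqrt (q k)| *
      (Real.sqrt (p k) + Real.sqrt (q k)) := by
    intro k
    have h1 : p k - q k = (Real.sqrt (p k) - Real.sqrt (q k)) *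
        (Real.sqrt (p k) + Real.sqrt (q k)) := by
      have := Real.sq_sqrt (hp k)
      have := Real.sq_sqrt (hq k)
      nlinarith
    rw [h1, abs_mul, abs_of_nonneg (add_nonneg (Real.sqrt_nonneg _) (Real.sqrt_nonneg _))]
  have hcs : (∑ k, |p k - q k|)^2 ≤
      (∑ k, |Real.sqrt (p k) - Real.sqrt (q k)|^2) *
      (∑ k, (Real.sqrt (p k) + Real.sqrt (q k))^2) := by
    calc (∑ k, |p k - q k|)^2
        = (∑ k, |Real.sqrt (p k) - Real.sqrt (q k)| *
            (Real.sqrt (p k) + Real.sqrt (q k)))^2 := by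
          congr 1; exact Finset.sum_congr rfl fun k _ => habs k
      _ ≤ _ := Finset.sum_mul_sq_le_sq_mul_sq _ _ _
  have hsqrtprod : ∀ k, Real.sqrt (p k * q k) = Real.sqrt (p k) * Real.sqrt (q k) :=
    fun k => Real.sqrt_mul (hp k) _
  have h1 : ∑ k, |Real.sqrt (p k) - Real.sqrt (q k)|^2 = 2 - 2*B := by
    have : ∀ k, |Real.sqrt (p k) - Real.sqrt (q k)|^2 =
        p k + q k - 2 * Real.sqrt (p k * q k) := by
      intro k
      rw [sq_abs, hsqrtprod k]
      have := Real.sq_sqrt (hp k)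
      have := Real.sq_sqrt (hq k)
      nlinarith
    rw [Finset.sum_congr rfl fun k _ => this k]
    simp [Finset.sum_add_distrib, Finset.sum_sub_distrib, hps, hqs, ← Finset.mul_sum, ← hB]
    ring
  have h2 : ∑ k, (Real.sqrt (p k) + Real.sqrt (q k))^2 = 2 + 2*B := by
    have : ∀ k, (Real.sqrt (p k) + Real.sqrt (q k))^2 =
        p k + q k + 2 * Real.sqrt (p k * q k) := by
      intro k
      rw [hsqrtprod k]
      have := Real.sq_sqrt (hp k)
      have := Real.sq_sqrt (hq k)
      nlinarith
    rw [Finset.sum_congr rfl fun k _ => this k]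
    simp [Finset.sum_add_distrib, hps, hqs, ← Finset.mul_sum, ← hB]
    ring
  have hS : 0 ≤ ∑ k, |p k - q k| := Finset.sum_nonneg fun k _ => abs_nonneg _
  rw [h1, h2] at hcs
  rw [show (1:ℝ)/2 * ∑ k, |p k - q k| = (∑ k, |p k - q k|)/2 by ring]
  apply Real.le_sqrt_of_sq_le
  nlinarith
end

section
/- Let ρ and ρ̃ be orthogonal pure states (tr(ρρ̃) = 0) and let {E₁, E₂} be a two-outcome POVM with tr(E₁ρ) = tr(E₁ρ̃) = 1 (hence tr(E₂ρ) = tr(E₂ρ̃) = 0). Then for any ε ∈ (0,1) and any number of repetitions R, the quantity max over density matrices χ₁, χ₂ of (1/2)(tr(ρχ₁) − tr(ρχ₂)) subject to F_C(χ₁,χ₂)^{R/2} ≥ ε/2 equals 1/2, where F_C(χ₁,χ₂) = (Σ_{k=1,2}√(tr(E_kχ₁)tr(E_kχ₂)))². -/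
open ComplexOrder Matrix

namespace Matrix

variable {n 𝕜 : Type*} [Fintype n] [RCLike 𝕜]

theorem IsHermitian.posSemidef_of_isIdempotentElem {P : Matrix n n 𝕜} (hP : P.IsHermitian)
    (hP2 : IsIdempotentElem P) : P.PosSemidef := by
  simpa [hP.eq, hP2.eq] using posSemidef_conjTranspose_mul_self P

theorem IsHermitian.trace_mul_nonneg_of_isIdempotentElem {P χ : Matrix n n 𝕜}
    (hP : P.IsHermitian) (hP2 : IsIdempotentElem P) (hχ : χ.PosSemidef) :
    0 ≤ (P * χ).trace := by
  have hcycle : (P * χ).trace = (P * χ * Pᴴ).trace := by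
    rw [hP.eq]
    nth_rw 1 [← hP2.eq]
    rw [mul_assoc, trace_mul_comm]
  exact hcycle ▸ (hχ.mul_mul_conjTranspose_same P).trace_nonneg

theorem IsHermitian.re_trace_mul_le_one_of_isIdempotentElem [DecidableEq n]
    {P χ : Matrix n n 𝕜} (hP : P.IsHermitian) (hP2 : IsIdempotentElem P)
    (hχ : χ.PosSemidef) (hχtr : χ.trace = 1) : RCLike.re (P * χ).trace ≤ 1 := by
  have h := (isHermitian_one.sub hP).trace_mul_nonneg_of_isIdempotentElem hP2.one_sub hχ
  rw [sub_mul, one_mul, trace_sub, hχtr, RCLike.nonneg_iff] at h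
  simpa using h.1

theorem trace_mul_eq_zero_of_add_eq_one {R : Type*} [Ring R] [DecidableEq n]
    {E₁ E₂ σ : Matrix n n R} (hEsum : E₁ + E₂ = 1) (hσ : σ.trace = 1)
    (h₁ : (E₁ * σ).trace = 1) : (E₂ * σ).trace = 0 := by
  rw [← add_sub_cancel_left E₁ E₂, hEsum, sub_mul, one_mul, trace_sub, hσ, h₁, sub_self]

end Matrix

theorem stmt_17_general (d : ℕ) (ρ ρt E₁ E₂ : Matrix (Fin d) (Fin d) ℂ)
    (hρH : ρ.IsHermitian) (hρ2 : ρ * ρ = ρ) (hρtr : ρ.trace = 1)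
    (hρtH : ρt.IsHermitian) (hρt2 : ρt * ρt = ρt) (hρttr : ρt.trace = 1)
    (horth : (ρ * ρt).trace = 0)
    (hEsum : E₁ + E₂ = 1)
    (h11 : (E₁ * ρ).trace = 1) (h12 : (E₁ * ρt).trace = 1)
    (R : ℕ) (ε : ℝ) (hε : ε ∈ Set.Ioo (0:ℝ) 1) :
    IsGreatest {v : ℝ | ∃ χ₁ χ₂ : Matrix (Fin d) (Fin d) ℂ,
      χ₁.PosSemidef ∧ χ₁.trace = 1 ∧ χ₂.PosSemidef ∧ χ₂.trace = 1 ∧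
      ((Real.sqrt ((E₁ * χ₁).trace.re * (E₁ * χ₂).trace.re)
        + Real.sqrt ((E₂ * χ₁).trace.re * (E₂ * χ₂).trace.re))^2) ^ ((R:ℝ)/2) ≥ ε/2 ∧
      v = (1/2) * ((ρ * χ₁).trace.re - (ρ * χ₂).trace.re)} (1/2 : ℝ) := by
  have hE₂ρ := trace_mul_eq_zero_of_add_eq_one hEsum hρtr h11
  have hE₂ρt := trace_mul_eq_zero_of_add_eq_one hEsum hρttr h12
  refine ⟨⟨ρ, ρt, hρH.posSemidef_of_isIdempotentElem hρ2, hρtr,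
    hρtH.posSemidef_of_isIdempotentElem hρt2, hρttr, ?_, ?_⟩, ?_⟩
  · simp only [h11, h12, hE₂ρ, hE₂ρt]
    norm_num
    linarith [hε.2]
  · simp [hρ2, hρtr, horth]
  · rintro v ⟨χ₁, χ₂, hχ₁, hχ₁tr, hχ₂, -, -, rfl⟩
    have hle := hρH.re_trace_mul_le_one_of_isIdempotentElem hρ2 hχ₁ hχ₁tr
    have hnonneg := (Complex.le_def.mp (hρH.trace_mul_nonneg_of_isIdempotentElem hρ2 hχ₂)).1
    simp only [RCLike.re_to_complex, Complex.zero_re] at hle hnonneg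
    linarith

theorem stmt_17 (d : ℕ) (ρ ρt E₁ E₂ : Matrix (Fin d) (Fin d) ℂ)
    (hρH : ρ.IsHermitian) (hρ2 : ρ * ρ = ρ) (hρtr : ρ.trace = 1)
    (hρtH : ρt.IsHermitian) (hρt2 : ρt * ρt = ρt) (hρttr : ρt.trace = 1)
    (horth : (ρ * ρt).trace = 0)
    (hE₁ : E₁.PosSemidef) (hE₂ : E₂.PosSemidef) (hEsum : E₁ + E₂ = 1)
    (h11 : (E₁ * ρ).trace = 1) (h12 : (E₁ * ρt).trace = 1)
    (R : ℕ) (hR : 0 < R) (ε : ℝ) (hε : ε ∈ Set.Ioo (0:ℝ) 1) :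
    IsGreatest {v : ℝ | ∃ χ₁ χ₂ : Matrix (Fin d) (Fin d) ℂ,
      χ₁.PosSemidef ∧ χ₁.trace = 1 ∧ χ₂.PosSemidef ∧ χ₂.trace = 1 ∧
      ((Real.sqrt ((E₁ * χ₁).trace.re * (E₁ * χ₂).trace.re)
        + Real.sqrt ((E₂ * χ₁).trace.re * (E₂ * χ₂).trace.re))^2) ^ ((R:ℝ)/2) ≥ ε/2 ∧
      v = (1/2) * ((ρ * χ₁).trace.re - (ρ * χ₂).trace.re)} (1/2 : ℝ) :=
  stmt_17_general d ρ ρt E₁ E₂ hρH hρ2 hρtr hρtH hρt2 hρttr horth hEsum h11 h12 R ε hε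
end
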